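/- For all smooth projective varieties X and Y over ℂ one has conFN(X × Y) ≥ max{conFN(X), conFN(Y)}. -/

import Mathlib

/-!
Abstract interface for the geometry used in "Convex Fujita numbers and the
fundamental group" (Chen–Küronya–Mustopa–Stix).

Mathlib does not yet contain ample divisors, canonical bundles, global generation,
or the topological fundamental group of the complex analytification of a variety.
We therefore record a smooth projective variety over `ℂ` abstractly through exactly
the data occurring in the statements of the paper: its divisor class (Picard) group,
canonical class, ample/very ample/globally generated classes, intersection numbers
(used for surfaces), the irregularity `h¹(O)`, membership in `Pic⁰`, the topological
fundamental group, and the qualitative properties of being connected and of general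
type.
-/

open scoped BigOperators

/-- Abstract data of a smooth projective variety over `ℂ`. -/
structure SmoothProjVariety : Type 1 where
  /-- divisor classes modulo linear equivalence (equivalently, the Picard group) -/
  Div : Type
  divAddCommGroup : AddCommGroup Div
  /-- the dimension -/
  dim : ℕ
  /-- the canonical divisor class `K_X` -/
  K : Div
  /-- `L` is ample -/
  IsAmple : Div → Prop
  /-- `L` is very ample -/
  IsVeryAmple : Div → Prop
  /-- (the line bundle associated to) `L` is globally generated -/
  IsGloballyGenerated : Div → Prop
  /-- a projective variety carries an ample divisor -/
  exists_ample : ∃ L, IsAmple L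
  /-- the intersection number `(L · M)` of two divisor classes (on a surface) -/
  inter : Div → Div → ℤ
  /-- the irregularity `h¹(X, O_X) = dim_ℂ H¹(X, O_X)` -/
  h1O : ℕ
  /-- the class lies in `Pic⁰`, i.e. it is algebraically equivalent to zero -/
  IsAlgTrivial : Div → Prop
  /-- the topological fundamental group of the associated complex analytic space -/
  π₁ : Type
  π₁Group : Group π₁
  /-- the variety is connected -/
  IsConnected : Prop
  /-- the variety is of general type -/
  IsGeneralType : Prop

attribute [instance] SmoothProjVariety.divAddCommGroup SmoothProjVariety.π₁Group

namespace SmoothProjVariety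

/-- All adjoint divisors `K_X + L₁ + ⋯ + L_s` with `s ≥ m` ample summands `Lᵢ`
are globally generated. -/
def AdjointFreeFrom (X : SmoothProjVariety) (m : ℕ) : Prop :=
  ∀ s : ℕ, m ≤ s → ∀ L : Fin s → X.Div, (∀ i, X.IsAmple (L i)) →
    X.IsGloballyGenerated (X.K + ∑ i, L i)

/-- The convex Fujita number of `X`: the least `m ≥ 0` such that for all `s ≥ m` and
all ample divisors `L₁, …, L_s` on `X` the adjoint divisor `K_X + L₁ + ⋯ + L_s` is
globally generated, and `⊤` (infinity) if no such `m` exists. -/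
noncomputable def conFN (X : SmoothProjVariety) : ℕ∞ :=
  sInf {n : ℕ∞ | ∃ m : ℕ, n = m ∧ X.AdjointFreeFrom m}

/-- Simple connectedness: the topological fundamental group is trivial. -/
def IsSimplyConnected (X : SmoothProjVariety) : Prop := ∀ g : X.π₁, g = 1

end SmoothProjVariety

/-- A group is projective if it is isomorphic to the topological fundamental group of
a smooth connected projective variety over `ℂ`. -/
def IsProjectiveGroup (π : Type) [Group π] : Prop :=
  ∃ X : SmoothProjVariety, X.IsConnected ∧ Nonempty (X.π₁ ≃* π)

/-- Data exhibiting `P` as the product `X × Y` of smooth projective varieties, through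
the standard structure of a product: the pullbacks along the two projections, the
dimension formula, the formula `ω_{X×Y} = ω_X ⊠ ω_Y`, the Künneth formula for `π₁`,
and the behaviour of box products `L ⊠ M = pr₁*L ⊗ pr₂*M` under ampleness and global
generation (via restriction to fibres and the Künneth formula). -/
structure ProductData (X Y P : SmoothProjVariety) where
  /-- pullback of divisor classes along the first projection -/
  pull₁ : X.Div →+ P.Div
  /-- pullback of divisor classes along the second projection -/
  pull₂ : Y.Div →+ P.Div
  dim_eq : P.dim = X.dim + Y.dim
  /-- `ω_{X×Y} = ω_X ⊠ ω_Y` -/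
  K_eq : P.K = pull₁ X.K + pull₂ Y.K
  /-- the Künneth formula for the fundamental group -/
  π₁equiv : P.π₁ ≃* X.π₁ × Y.π₁
  connected_iff : P.IsConnected ↔ (X.IsConnected ∧ Y.IsConnected)
  /-- `L ⊠ M` is ample iff `L` and `M` are ample -/
  isAmple_box : ∀ (L : X.Div) (M : Y.Div),
      P.IsAmple (pull₁ L + pull₂ M) ↔ (X.IsAmple L ∧ Y.IsAmple M)
  /-- `L ⊠ M` is globally generated iff `L` and `M` are globally generated -/
  isGG_box : ∀ (L : X.Div) (M : Y.Div),
      P.IsGloballyGenerated (pull₁ L + pull₂ M) ↔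
        (X.IsGloballyGenerated L ∧ Y.IsGloballyGenerated M)

/-- Data exhibiting `X` as a smooth complete intersection of multidegree
`(d 0, …, d (r−1))` and dimension `n` in `ℙ^{n+r}`, recorded through the structure
of its Picard group: by the Lefschetz hyperplane theorem (`n ≥ 3`), `Pic X` is
generated by the hyperplane class `H = O(1)|_X`, with `O(a)|_X` ample iff `a ≥ 1`
and globally generated iff `a ≥ 0`, and by adjunction
`K_X = (∑ dᵢ − (n + r + 1)) H`. -/
structure CompleteIntersectionData (X : SmoothProjVariety) (n r : ℕ) (d : Fin r → ℕ) where
  dim_eq : X.dim = n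
  /-- the hyperplane class `O(1)|_X` -/
  H : X.Div
  /-- `Pic X = ℤ · H` (Lefschetz hyperplane theorem) -/
  gen : ∀ L : X.Div, ∃ a : ℤ, L = a • H
  isAmple_iff : ∀ a : ℤ, X.IsAmple (a • H) ↔ 1 ≤ a
  isGG_iff : ∀ a : ℤ, X.IsGloballyGenerated (a • H) ↔ 0 ≤ a
  /-- adjunction -/
  K_eq : X.K = ((∑ i, (d i : ℤ)) - (n + r + 1)) • H

/-- Data exhibiting the smooth projective surface `X` as the blow-up of `ℙ²` in `j`
points in general position (`j ≤ 2` in this paper, where all the blow-ups are toric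
and nef equals globally generated): a divisor class has coordinates `(δ, a)`
representing `δH − ∑ᵢ aᵢ Eᵢ`; the canonical class is `−3H + ∑ᵢ Eᵢ`, ampleness and
global generation of `δH − ∑ᵢ aᵢ Eᵢ` are given by the (strict) inequalities
`aᵢ ≥ 0` and `∑ᵢ aᵢ ≤ δ`. -/
structure BlowupP2Data (X : SmoothProjVariety) (j : ℕ) where
  /-- coordinates `(δ, a)` of a divisor class `δH − ∑ᵢ aᵢEᵢ` -/
  coords : X.Div ≃+ ℤ × (Fin j → ℤ)
  K_eq : coords X.K = (-3, fun _ => 1)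
  isAmple_iff : ∀ L : X.Div,
      X.IsAmple L ↔ ((∀ i, 0 < (coords L).2 i) ∧ (∑ i, (coords L).2 i) < (coords L).1)
  isGG_iff : ∀ L : X.Div,
      X.IsGloballyGenerated L ↔ ((∀ i, 0 ≤ (coords L).2 i) ∧ (∑ i, (coords L).2 i) ≤ (coords L).1)

/-- Data exhibiting the smooth projective surface `S'` as the blow-up `σ : S' → S` of a
smooth projective surface `S` in one point, with exceptional divisor `E`:
`Pic S' = σ*Pic S ⊕ ℤE` (a class has coordinates `(L, a)` representing `σ*L − aE`),
`K_{S'} = σ*K_S + E`, the intersection form is `(σ*L − aE)·(σ*M − bE) = (L·M) − ab`,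
and `π₁(S') = π₁(S)` by birational invariance. -/
structure BlowupPointData (S' S : SmoothProjVariety) where
  /-- coordinates `(L, a)` of a divisor class `σ*L − aE` -/
  coords : S'.Div ≃+ S.Div × ℤ
  /-- `K_{S'} = σ*K_S + E` -/
  K_eq : coords S'.K = (S.K, -1)
  inter_eq : ∀ (L M : S.Div) (a b : ℤ),
      S'.inter (coords.symm (L, a)) (coords.symm (M, b)) = S.inter L M - a * b
  /-- birational invariance of the fundamental group -/
  π₁equiv : S'.π₁ ≃* S.π₁

/-- Data exhibiting the smooth projective curve `P` as `ℙ¹`: divisor classes are given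
by their degree, ample = positive degree, globally generated = nonnegative degree,
`deg K = −2`, and `ℙ¹` is simply connected. -/
structure P1Data (P : SmoothProjVariety) where
  deg : P.Div ≃+ ℤ
  dim_eq : P.dim = 1
  isAmple_iff : ∀ L : P.Div, P.IsAmple L ↔ 0 < deg L
  isGG_iff : ∀ L : P.Div, P.IsGloballyGenerated L ↔ 0 ≤ deg L
  K_eq : deg P.K = -2
  simplyConnected : ∀ g : P.π₁, g = 1

/-- Data of a cyclic degree-`d` cover `f : X → Y` which is totally branched along a
smooth divisor `B` in the linear system of `L^{⊗d}`, i.e.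
`X = Spec_Y (Sym•(L^{−1})/(L^{⊗−d} = O_Y(−B)))`, recorded through its effect on
divisor classes and fundamental groups: the pullback `f^*` on Picard groups and the
pushforward `f_*` on `π₁`, the canonical bundle formula
`ω_X ≅ f^*(ω_Y ⊗ L^{⊗(d−1)})`, and the facts that pullbacks of globally generated
classes are globally generated and (as `f` is finite) pullbacks of ample classes are
ample. -/
structure CyclicCoverData (X Y : SmoothProjVariety) (d : ℕ) where
  /-- the line bundle `L` with `O_Y(B) ≅ L^{⊗d}` for the smooth branch divisor `B` -/
  L : Y.Div
  /-- the pullback `f^*` on divisor classes -/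
  pull : Y.Div →+ X.Div
  /-- the pushforward `f_*` on topological fundamental groups -/
  π₁map : X.π₁ →* Y.π₁
  /-- the canonical bundle formula `ω_X ≅ f^*(ω_Y ⊗ L^{⊗(d−1)})` -/
  K_eq : X.K = pull (Y.K + ((d : ℤ) - 1) • L)
  gg_pull : ∀ M : Y.Div, Y.IsGloballyGenerated M → X.IsGloballyGenerated (pull M)
  ample_pull : ∀ M : Y.Div, Y.IsAmple M → X.IsAmple (pull M)

/-- An abstract theory of abelian varieties over `ℂ`: a type of objects, their groups
of `ℂ`-points, and the predicate singling out the algebraic homomorphisms among the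
maps of points. -/
structure AbVarTheory : Type 2 where
  Obj : Type 1
  /-- the group of `ℂ`-points -/
  pt : Obj → Type
  ptGroup : ∀ A, AddCommGroup (pt A)
  /-- `f` is (induced on points by) a homomorphism of abelian varieties -/
  IsAlgHom : ∀ A B : Obj, (pt A → pt B) → Prop

attribute [instance] AbVarTheory.ptGroup

/-- Two abelian varieties `A` and `B` have a common nontrivial isogeny factor:
there is a nonzero abelian variety `C` admitting homomorphisms with finite kernel
to both `A` and `B` (equivalently, `C` is isogenous to an abelian subvariety of
both `A` and `B`). -/
def AbVarTheory.HasCommonIsogenyFactor (T : AbVarTheory) (A B : T.Obj) : Prop :=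
  ∃ C : T.Obj, (∃ c : T.pt C, c ≠ 0) ∧
    (∃ f : T.pt C → T.pt A, T.IsAlgHom C A f ∧ (f ⁻¹' {0}).Finite) ∧
    (∃ g : T.pt C → T.pt B, T.IsAlgHom C B g ∧ (g ⁻¹' {0}).Finite)

/-- Data exhibiting `A` as the abelian variety `Pic⁰_X`: its points are identified with
the divisor classes on `X` which are algebraically equivalent to zero. -/
structure Pic0Data (T : AbVarTheory) (X : SmoothProjVariety) where
  A : T.Obj
  toDiv : T.pt A →+ X.Div
  inj : Function.Injective toDiv
  range_eq : ∀ L : X.Div, (∃ a, toDiv a = L) ↔ X.IsAlgTrivial L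

namespace ProductData

variable {X Y P : SmoothProjVariety}

def swap (prod : ProductData X Y P) : ProductData Y X P where
  pull₁ := prod.pull₂
  pull₂ := prod.pull₁
  dim_eq := prod.dim_eq.trans (add_comm _ _)
  K_eq := prod.K_eq.trans (add_comm _ _)
  π₁equiv := prod.π₁equiv.trans MulEquiv.prodComm
  connected_iff := prod.connected_iff.trans and_comm
  isAmple_box M L := by rw [add_comm, prod.isAmple_box, and_comm]
  isGG_box M L := by rw [add_comm, prod.isGG_box, and_comm]

/-- Test `X × Y` on the box products `Lᵢ ⊠ M` for a fixed ample `M` on `Y`: their adjoint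
divisor is `(K_X + ∑ Lᵢ) ⊠ (K_Y + s M)`, whose global generation forces that of `K_X + ∑ Lᵢ`. -/
theorem adjointFreeFrom_left (prod : ProductData X Y P) {m : ℕ}
    (h : P.AdjointFreeFrom m) : X.AdjointFreeFrom m := by
  intro s hs L hL
  obtain ⟨M, hM⟩ := Y.exists_ample
  have hbox : P.K + ∑ i, (prod.pull₁ (L i) + prod.pull₂ M)
      = prod.pull₁ (X.K + ∑ i, L i) + prod.pull₂ (Y.K + s • M) := by
    rw [prod.K_eq, Finset.sum_add_distrib, Finset.sum_const, ← map_sum, map_add,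
      map_add, map_nsmul, Finset.card_univ, Fintype.card_fin]
    abel
  have hgg := h s hs (fun i => prod.pull₁ (L i) + prod.pull₂ M)
    (fun i => (prod.isAmple_box _ _).mpr ⟨hL i, hM⟩)
  rw [hbox] at hgg
  exact ((prod.isGG_box _ _).mp hgg).1

theorem adjointFreeFrom_right (prod : ProductData X Y P) {m : ℕ}
    (h : P.AdjointFreeFrom m) : Y.AdjointFreeFrom m :=
  prod.swap.adjointFreeFrom_left h

end ProductData

namespace SmoothProjVariety

theorem conFN_le_of_adjointFreeFrom {X P : SmoothProjVariety}
    (h : ∀ m, P.AdjointFreeFrom m → X.AdjointFreeFrom m) : X.conFN ≤ P.conFN := by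
  apply le_sInf
  rintro n ⟨m, rfl, hm⟩
  exact sInf_le ⟨m, rfl, h m hm⟩

end SmoothProjVariety

/-- For smooth projective varieties `X` and `Y` one has
`conFN(X × Y) ≥ max{conFN(X), conFN(Y)}`. -/
theorem max_conFN_le_conFN_prod (X Y P : SmoothProjVariety)
    (prod : ProductData X Y P) :
    max X.conFN Y.conFN ≤ P.conFN :=
  max_le (SmoothProjVariety.conFN_le_of_adjointFreeFrom fun _ => prod.adjointFreeFrom_left)
    (SmoothProjVariety.conFN_le_of_adjointFreeFrom fun _ => prod.adjointFreeFrom_right)
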